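/- Let (2P_1+P_3)^b be the labelled bipartite graph consisting of two isolated black vertices together with a path on three vertices whose two endpoints are black and whose middle vertex is white. Let G be a bipartite graph with a bipartition (B, W) into independent sets such that |B| ≥ 4 and (2P_1+P_3)^b is not a labelled induced subgraph of (B, W, E_G). Let W' be the set of vertices of W adjacent to all but at most one vertex of B, and let G_1 be the graph obtained from G by a bipartite complementation between W' and B (replacing every edge with one endpoint in W' and the other in B by a non-edge and vice versa). Then every vertex of W has at most one neighbour in G_1; in particular, G_1 is a disjoint union of stars. -/

import Mathlib

open SimpleGraph

/-- `B` is the black colour class of a black-and-white labelling of `H`: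
every edge of `H` joins a vertex of `B` to a vertex outside `B`
(equivalently, `B` and its complement `Bᶜ` are both independent sets,
i.e. `(B, Bᶜ)` is a bipartition of `H` into two possibly empty independent sets). -/
def IsBWLabelling {V : Type*} (H : SimpleGraph V) (B : Set V) : Prop :=
  ∀ ⦃u v : V⦄, H.Adj u v → (u ∈ B ↔ v ∉ B)

/-- `H` with black class `BH` is a labelled induced subgraph of `G` with black class `BG`:
there is an injective map preserving both adjacency and non-adjacency which maps
black vertices to black vertices and white vertices to white vertices. -/
def LabelledIndSubgraph {VH VG : Type*} (H : SimpleGraph VH) (BH : Set VH)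
    (G : SimpleGraph VG) (BG : Set VG) : Prop :=
  ∃ f : VH → VG, Function.Injective f ∧
    (∀ u v : VH, H.Adj u v ↔ G.Adj (f u) (f v)) ∧
    (∀ u : VH, u ∈ BH ↔ f u ∈ BG)

/-- `G` is strongly `H^ℓ`-free, where `BH` is the black class of the labelling `ℓ`:
there is no bipartition `(BG, BGᶜ)` of `G` such that `H^ℓ` is a labelled induced
subgraph of `(BG, BGᶜ, E_G)`. -/
def StronglyFree {VG VH : Type*} (G : SimpleGraph VG) (H : SimpleGraph VH)
    (BH : Set VH) : Prop :=
  ¬ ∃ BG : Set VG, IsBWLabelling G BG ∧ LabelledIndSubgraph H BH G BG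

/-- `G` is weakly `H^ℓ`-free, where `BH` is the black class of the labelling `ℓ`:
it is not the case that `H^ℓ` is a labelled induced subgraph of `(BG, BGᶜ, E_G)`
for every bipartition `(BG, BGᶜ)` of `G`. -/
def WeaklyFree {VG VH : Type*} (G : SimpleGraph VG) (H : SimpleGraph VH)
    (BH : Set VH) : Prop :=
  ¬ ∀ BG : Set VG, IsBWLabelling G BG → LabelledIndSubgraph H BH G BG

/-- `G` is `H`-free: `G` contains no induced subgraph isomorphic to `H`. -/
def HFree {VG VH : Type*} (G : SimpleGraph VG) (H : SimpleGraph VH) : Prop :=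
  ¬ ∃ f : VH → VG, Function.Injective f ∧ ∀ u v : VH, H.Adj u v ↔ G.Adj (f u) (f v)

/-- The graph obtained from `G` by a bipartite complementation between the disjoint
vertex subsets `X` and `Y`: every edge with one endpoint in `X` and the other in `Y`
is replaced by a non-edge and vice versa; all other adjacencies are unchanged. -/
def bipComplementation {V : Type*} (G : SimpleGraph V) (X Y : Set V) :
    SimpleGraph V where
  Adj u v :=
    (((u ∈ X ∧ v ∈ Y) ∨ (v ∈ X ∧ u ∈ Y)) ∧ u ≠ v ∧ ¬ G.Adj u v) ∨
    (¬ ((u ∈ X ∧ v ∈ Y) ∨ (v ∈ X ∧ u ∈ Y)) ∧ G.Adj u v)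
  symm := by
    constructor
    intro u v h
    rcases h with ⟨hc, hne, hna⟩ | ⟨hc, ha⟩
    · exact Or.inl ⟨hc.symm, hne.symm, fun h => hna h.symm⟩
    · exact Or.inr ⟨fun h => hc h.symm, ha.symm⟩
  loopless := by
    constructor
    intro u h
    rcases h with ⟨_, hne, _⟩ | ⟨_, ha⟩
    · exact hne rfl
    · exact G.irrefl ha

/-- The graph `2P_1 + P_3`: two isolated vertices `0, 1` and the path `2-3-4`.
In the labelling `(2P_1+P_3)^b` the vertices `0, 1, 2, 4` are black and the
middle vertex `3` of the path is white. -/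
def g2P1'P3 : SimpleGraph (Fin 5) := SimpleGraph.fromEdgeSet {s(2, 3), s(3, 4)}

/-- The star `K_{1,r}`: the centre `0` is adjacent to the `r` leaves. -/
def starGraph (r : ℕ) : SimpleGraph (Fin (r + 1)) :=
  SimpleGraph.fromRel (fun a _ => a = 0)

/-! A white vertex `w` outside `W'` misses two black vertices `u, v`; if it also had two
neighbours `x, y`, then `u, v, x, w, y` would induce `(2P_1+P_3)^b`. So after the
complementation a white vertex in `W'` keeps only its at most one former non-neighbour and
any other white vertex its at most one neighbour. In a bipartite graph whose white vertices
have degree at most one, every component is the closed neighbourhood of a black vertex or an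
isolated white vertex, hence a star. -/

namespace SimpleGraph

variable {V : Type*} {G : SimpleGraph V}

lemma Reachable.mem_of_forall_adj_mem {S : Set V} (hS : ∀ u ∈ S, ∀ v, G.Adj u v → v ∈ S)
    {u v : V} (h : G.Reachable u v) (hu : u ∈ S) : v ∈ S := by
  obtain ⟨p⟩ := h
  induction p with
  | nil => exact hu
  | cons hadj _ ih => exact ih (hS _ hu _ hadj)

lemma supp_connectedComponentMk_eq_insert_neighborSet {c : V}
    (hc : ∀ u ∈ G.neighborSet c, ∀ v, G.Adj u v → v = c) :
    (G.connectedComponentMk c).supp = insert c (G.neighborSet c) := by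
  ext v
  rw [ConnectedComponent.mem_supp_iff, ConnectedComponent.eq]
  refine ⟨fun h => h.symm.mem_of_forall_adj_mem ?_ (Set.mem_insert c _), ?_⟩
  · rintro u (rfl | hu) v huv
    · exact Or.inr huv
    · exact Or.inl (hc u hu v huv)
  · rintro (rfl | hv)
    · rfl
    · exact (Adj.reachable hv).symm

lemma induce_insert_neighborSet_eq_starGraph {c : V}
    (hc : ∀ u ∈ G.neighborSet c, ∀ v ∈ G.neighborSet c, ¬ G.Adj u v) :
    G.induce (insert c (G.neighborSet c)) = SimpleGraph.starGraph ⟨c, Set.mem_insert c _⟩ := by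
  ext ⟨u, hu⟩ ⟨v, hv⟩
  simp only [comap_adj, Function.Embedding.subtype_apply, starGraph_adj, ne_eq, Subtype.mk.injEq]
  rcases hu with rfl | hu <;> rcases hv with rfl | hv
  · simp
  · simpa [G.ne_of_adj hv] using hv
  · simpa [(G.ne_of_adj hu).symm] using hu.symm
  · simpa [(G.ne_of_adj hu).symm, (G.ne_of_adj hv).symm] using hc u hu v hv

lemma exists_iso_starGraph_fin {α : Type*} [Finite α] (c : α) :
    ∃ r, Nonempty (SimpleGraph.starGraph c ≃g _root_.starGraph r) := by
  obtain ⟨n, ⟨e⟩⟩ := Finite.exists_equiv_fin α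
  obtain ⟨r, rfl⟩ : ∃ r, n = r + 1 := Nat.exists_eq_succ_of_ne_zero (Fin.pos (e c)).ne'
  let E := e.trans (Equiv.swap (e c) 0)
  refine ⟨r, ⟨E, fun {a b} => ?_⟩⟩
  change (SimpleGraph.starGraph 0).Adj (E a) (E b) ↔ _
  simp [E, e.injective.eq_iff, Equiv.swap_apply_eq_iff]

end SimpleGraph

section Labelled

variable {V : Type*} {G : SimpleGraph V} {B : Set V}

lemma IsBWLabelling.not_adj_of_mem (hB : IsBWLabelling G B) {u v : V} (hu : u ∈ B) (hv : v ∈ B) :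
    ¬ G.Adj u v :=
  fun h => (hB h).mp hu hv

lemma IsBWLabelling.mem_of_adj (hB : IsBWLabelling G B) {u v : V} (hu : u ∉ B) (h : G.Adj u v) :
    v ∈ B :=
  not_not.mp fun hv => hu ((hB h).mpr hv)

lemma labelledIndSubgraph_g2P1'P3 (hB : IsBWLabelling G B) {u v x w y : V}
    (hu : u ∈ B) (hv : v ∈ B) (hx : x ∈ B) (hy : y ∈ B) (hw : w ∉ B) (huv : u ≠ v) (hxy : x ≠ y)
    (hwu : ¬ G.Adj w u) (hwv : ¬ G.Adj w v) (hwx : G.Adj w x) (hwy : G.Adj w y) :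
    LabelledIndSubgraph g2P1'P3 {0, 1, 2, 4} G B := by
  have hne : ∀ a ∈ B, a ≠ w := fun a ha h => hw (h ▸ ha)
  have hux : u ≠ x := fun h => hwu (h ▸ hwx)
  have huy : u ≠ y := fun h => hwu (h ▸ hwy)
  have hvx : v ≠ x := fun h => hwv (h ▸ hwx)
  have hvy : v ≠ y := fun h => hwv (h ▸ hwy)
  have hBB : ∀ a ∈ B, ∀ b ∈ B, ¬ G.Adj a b := fun _ ha _ hb => hB.not_adj_of_mem ha hb
  refine ⟨![u, v, x, w, y], ?_, ?_, ?_⟩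
  · intro a b hab
    fin_cases a <;> fin_cases b <;> simp_all [eq_comm]
  · intro a b
    fin_cases a <;> fin_cases b <;> simp_all [g2P1'P3, G.adj_comm w]
  · intro a
    fin_cases a <;> simp_all

lemma ncard_nonadj_le_one_or_ncard_adj_le_one (hB : IsBWLabelling G B)
    (hfree : ¬ LabelledIndSubgraph g2P1'P3 {0, 1, 2, 4} G B) {w : V} (hw : w ∉ B) :
    {b ∈ B | ¬ G.Adj w b}.ncard ≤ 1 ∨ {v | G.Adj w v}.ncard ≤ 1 := by
  by_contra! h
  obtain ⟨u, ⟨hu, hwu⟩, v, ⟨hv, hwv⟩, huv⟩ :=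
    (Set.one_lt_ncard (Set.finite_of_ncard_pos (by lia))).mp h.1
  obtain ⟨x, hwx, y, hwy, hxy⟩ := (Set.one_lt_ncard (Set.finite_of_ncard_pos (by lia))).mp h.2
  exact hfree (labelledIndSubgraph_g2P1'P3 hB hu hv (hB.mem_of_adj hw hwx) (hB.mem_of_adj hw hwy)
    hw huv hxy hwu hwv hwx hwy)

lemma bipComplementation_adj_of_not_mem {X Y : Set V} {w v : V} (hwX : w ∉ X) (hwY : w ∉ Y) :
    (bipComplementation G X Y).Adj w v ↔ G.Adj w v := by
  simp [bipComplementation, hwX, hwY]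

lemma IsBWLabelling.bipComplementation_adj_of_mem (hB : IsBWLabelling G B) {X : Set V}
    (hX : X ⊆ Bᶜ) {w v : V} (hw : w ∈ X) :
    (bipComplementation G X B).Adj w v ↔ v ∈ B ∧ ¬ G.Adj w v := by
  have hwB : w ∉ B := hX hw
  by_cases hv : v ∈ B
  · simp [bipComplementation, hw, hv, hwB, (ne_of_mem_of_not_mem hv hwB).symm]
  · simpa [bipComplementation, hw, hv, hwB] using fun h => hv (hB.mem_of_adj hwB h)

lemma IsBWLabelling.bipComplementation (hB : IsBWLabelling G B) {X : Set V} (hX : X ⊆ Bᶜ) :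
    IsBWLabelling (bipComplementation G X B) B := by
  rintro u v (⟨⟨hu, hv⟩ | ⟨hv, hu⟩, -, -⟩ | ⟨-, h⟩)
  · simp [hv, show u ∉ B from hX hu]
  · simp [hu, show v ∉ B from hX hv]
  · exact hB h

lemma ncard_neighborSet_bipComplementation_le_one (hB : IsBWLabelling G B)
    (hfree : ¬ LabelledIndSubgraph g2P1'P3 {0, 1, 2, 4} G B) {w : V} (hw : w ∉ B) :
    {v | (bipComplementation G {w | w ∉ B ∧ {b ∈ B | ¬ G.Adj w b}.ncard ≤ 1} B).Adj w v}.ncard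
      ≤ 1 := by
  by_cases hwW : {b ∈ B | ¬ G.Adj w b}.ncard ≤ 1
  · convert hwW using 2
    exact Set.ext fun v => hB.bipComplementation_adj_of_mem (fun _ hx => hx.1) ⟨hw, hwW⟩
  · convert (ncard_nonadj_le_one_or_ncard_adj_le_one hB hfree hw).resolve_left hwW using 2
    exact Set.ext fun v => bipComplementation_adj_of_not_mem (fun h => hwW h.2) hw

lemma IsBWLabelling.exists_iso_starGraph [Finite V] (hB : IsBWLabelling G B)
    (hdeg : ∀ w ∉ B, {v | G.Adj w v}.ncard ≤ 1) (C : G.ConnectedComponent) :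
    ∃ r, Nonempty (G.induce C.supp ≃g _root_.starGraph r) := by
  obtain ⟨c, rfl, hc⟩ : ∃ c, G.connectedComponentMk c = C ∧ (c ∈ B ∨ G.neighborSet c = ∅) := by
    obtain ⟨v, rfl⟩ := C.exists_rep
    by_cases hv : v ∈ B
    · exact ⟨v, rfl, Or.inl hv⟩
    obtain ⟨b, hvb⟩ | hN := (G.neighborSet v).eq_empty_or_nonempty.symm
    · exact ⟨b, (ConnectedComponent.connectedComponentMk_eq_of_adj hvb).symm,
        Or.inl (hB.mem_of_adj hv hvb)⟩
    · exact ⟨v, rfl, Or.inr hN⟩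
  have hleaf : ∀ u ∈ G.neighborSet c, ∀ v, G.Adj u v → v = c := by
    rcases hc with hc | hc
    · intro u hcu v huv
      have hu : u ∉ B := fun hu => hB.not_adj_of_mem hc hu hcu
      exact (Set.ncard_le_one (Set.toFinite _)).mp (hdeg u hu) v huv c hcu.symm
    · simp [hc]
  have hindep : ∀ u ∈ G.neighborSet c, ∀ v ∈ G.neighborSet c, ¬ G.Adj u v :=
    fun u hu v hv huv => G.ne_of_adj huv ((hleaf v hv u huv.symm).trans (hleaf u hu v huv).symm)
  rw [supp_connectedComponentMk_eq_insert_neighborSet hleaf,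
    induce_insert_neighborSet_eq_starGraph hindep]
  exact exists_iso_starGraph_fin _

end Labelled

theorem stmt_16 {V : Type*} [Fintype V] (G : SimpleGraph V) (B : Set V)
    (hB : IsBWLabelling G B)
    (hfree : ¬ LabelledIndSubgraph g2P1'P3 ({0, 1, 2, 4} : Set (Fin 5)) G B)
    (W' : Set V) (hW' : W' = {w | w ∉ B ∧ ({b ∈ B | ¬ G.Adj w b}).ncard ≤ 1})
    (G₁ : SimpleGraph V) (hG₁ : G₁ = bipComplementation G W' B) :
    (∀ w ∉ B, ({v | G₁.Adj w v}).ncard ≤ 1) ∧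
    (∀ c : G₁.ConnectedComponent,
      ∃ r : ℕ, Nonempty ((G₁.induce c.supp) ≃g _root_.starGraph r)) := by
  subst hW' hG₁
  have hdeg : ∀ w ∉ B, _ := fun w hw => ncard_neighborSet_bipComplementation_le_one hB hfree hw
  exact ⟨hdeg, (hB.bipComplementation fun _ hw => hw.1).exists_iso_starGraph hdeg⟩
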